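/- (Pointwise O(1/√k) rate for Algorithm 1.) Let {z̃_k}, {v_k}, {ε_k}, {λ_k} be generated by Algorithm 1 (inertial under-relaxed HPE) for a maximal monotone operator T on a real Hilbert space H with T⁻¹(0) nonempty, assume Assumption (A), let η := 2/((1+σ)τ) − 1 and q(t) := (η−1)t² − (1+2η)t + η, let d₀ be the distance of z₀ to T⁻¹(0), and assume λ_k ≥ λ̲ > 0 for all k ≥ 1. Then for every k ≥ 1 there exists i ∈ {1,…,k} such that v_i ∈ T^{ε_i}(z̃_i), ‖v_i‖ ≤ (d₀/(λ̲ τ √k)) √(η⁻¹ (1 + 2α(1+α)/((1−α)² q(α)))), and ε_i ≤ (σ d₀² / (2(1−σ²) λ̲ τ k)) (1 + 2α(1+α)/((1−α)² q(α))). -/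

import Mathlib

open Filter Finset Topology
open scoped RealInnerProductSpace

/-!
Let `zs` be the point of the closed convex set `T⁻¹(0)` nearest to `z₀`, so `‖z₀ - zs‖ = d₀`.
Since `(zs, 0)` lies in the graph of `T`, each relaxed HPE step satisfies
`η ‖z_k - w_{k-1}‖² ≤ M_k` and `τ (1 - σ²) ‖z̃_k - w_{k-1}‖² ≤ M_k`, where
`M_k = ‖w_{k-1} - zs‖² - ‖z_k - zs‖²`. The inertial extrapolation is controlled by the energy
`inertialEnergy`, which is nonnegative and, multiplied by `η`, decreases by at least `q(α) M_k`
per step; Assumption (A) is exactly what makes `q(α) > 0`. Telescoping gives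
`∑_{j ≤ k} M_j ≤ η (1-α)² d₀² / q(α)`, so some `M_i` is at most `1/k` of this, and the two HPE
estimates turn that into the bounds on `‖v_i‖` and `ε_i`.
-/

/-- A set-valued operator `T : H ⇒ H` is monotone. -/
def IsMonotoneOp {H : Type*} [NormedAddCommGroup H] [InnerProductSpace ℝ H]
    (T : H → Set H) : Prop :=
  ∀ ⦃z z' v v' : H⦄, v ∈ T z → v' ∈ T z' → 0 ≤ ⟪z - z', v - v'⟫

/-- `T` is maximal monotone: it is monotone and its graph is not properly contained in the
graph of any other monotone operator. -/
def IsMaximalMonotoneOp {H : Type*} [NormedAddCommGroup H] [InnerProductSpace ℝ H]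
    (T : H → Set H) : Prop :=
  IsMonotoneOp T ∧ ∀ S : H → Set H, IsMonotoneOp S → (∀ z, T z ⊆ S z) → ∀ z, S z ⊆ T z

/-- The ε-enlargement `T^ε` of a set-valued operator `T`. -/
def enl {H : Type*} [NormedAddCommGroup H] [InnerProductSpace ℝ H]
    (T : H → Set H) (ε : ℝ) (z : H) : Set H :=
  {v | ∀ z' v', v' ∈ T z' → ⟪z - z', v - v'⟫ ≥ -ε}

namespace IsMaximalMonotoneOp

variable {H : Type*} [NormedAddCommGroup H] [InnerProductSpace ℝ H] {T : H → Set H}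

theorem mem_iff (hT : IsMaximalMonotoneOp T) {z v : H} :
    v ∈ T z ↔ ∀ z' v', v' ∈ T z' → 0 ≤ ⟪z - z', v - v'⟫ := by
  refine ⟨fun hv z' v' hv' => hT.1 hv hv', fun h => ?_⟩
  let S : H → Set H := fun x => T x ∪ {u | x = z ∧ u = v}
  have hS : IsMonotoneOp S := by
    rintro a b c d (hc | ⟨rfl, rfl⟩) (hd | ⟨rfl, rfl⟩)
    · exact hT.1 hc hd
    · rw [← neg_sub b, ← neg_sub d, inner_neg_neg]
      exact h a c hc
    · exact h b d hd
    · simp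
  exact hT.2 S hS (fun _ => Set.subset_union_left) z (Or.inr ⟨rfl, rfl⟩)

theorem setOf_mem_eq_biInter (hT : IsMaximalMonotoneOp T) (v : H) :
    {x | v ∈ T x} = ⋂ p ∈ {p : H × H | p.2 ∈ T p.1}, {x | ⟪p.1, v - p.2⟫ ≤ ⟪x, v - p.2⟫} := by
  ext x
  rw [Set.mem_ofPred, hT.mem_iff]
  simp only [Set.mem_iInter, Set.mem_ofPred, Prod.forall, inner_sub_left, sub_nonneg]

theorem isClosed_setOf_mem (hT : IsMaximalMonotoneOp T) (v : H) : IsClosed {x | v ∈ T x} := by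
  rw [hT.setOf_mem_eq_biInter]
  exact isClosed_biInter fun p _ =>
    isClosed_le continuous_const (continuous_id.inner continuous_const)

theorem convex_setOf_mem (hT : IsMaximalMonotoneOp T) (v : H) : Convex ℝ {x | v ∈ T x} := by
  rw [hT.setOf_mem_eq_biInter]
  exact convex_iInter₂ fun p _ => convex_halfSpace_ge (innerₛₗ ℝ |>.flip (v - p.2)).isLinear _

end IsMaximalMonotoneOp

theorem exists_norm_sub_eq_infDist_of_isClosed_convex {H : Type*} [NormedAddCommGroup H]
    [InnerProductSpace ℝ H] [CompleteSpace H] {K : Set H} (hne : K.Nonempty) (hc : IsClosed K)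
    (hK : Convex ℝ K) (x : H) : ∃ y ∈ K, ‖x - y‖ = Metric.infDist x K := by
  obtain ⟨y, hy, hmin⟩ := exists_norm_eq_iInf_of_complete_convex hne hc.isComplete hK x
  exact ⟨y, hy, by simp only [hmin, Metric.infDist_eq_iInf, dist_eq_norm]⟩

section HPE

variable {H : Type*} [NormedAddCommGroup H] [InnerProductSpace ℝ H]

theorem norm_sq_le_of_hpe_error {σ e : ℝ} {a u : H} (hσ0 : 0 ≤ σ) (hσ1 : σ ≤ 1) (he : 0 ≤ e)
    (herr : ‖a + u‖ ^ 2 + 2 * e ≤ σ ^ 2 * ‖u‖ ^ 2) :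
    ‖a‖ ^ 2 ≤ (1 + σ) * (-⟪u, a⟫ - e) := by
  set r := a + u
  have ha : a = r - u := by simp [r]
  have hr : ‖r‖ ≤ σ * ‖u‖ :=
    abs_le_of_sq_le_sq' (by nlinarith) (by positivity) |>.2
  have hru : -(‖u‖ * ‖r‖) ≤ ⟪u, r⟫ := neg_le_of_abs_le (abs_real_inner_le_norm u r)
  rw [ha, norm_sub_sq_real, inner_sub_right, real_inner_self_eq_norm_sq, real_inner_comm]
  nlinarith [mul_nonneg (mul_nonneg (sub_nonneg.2 hσ1) (sub_nonneg.2 hr))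
      (by positivity : (0:ℝ) ≤ σ * ‖u‖ + ‖r‖ + 2 * ‖u‖),
    mul_nonneg (sub_nonneg.2 hσ1) (neg_le_iff_add_nonneg.1 hru)]

theorem hpe_step_descent {σ τ η lam ε : ℝ} {zs w z ztil v : H} (hσ0 : 0 ≤ σ) (hσ1 : σ ≤ 1)
    (hτ0 : 0 ≤ τ) (hτ1 : τ ≤ 1) (hlam : 0 ≤ lam) (hε : 0 ≤ ε)
    (hη : (1 + η) * ((1 + σ) * τ) = 2) (hmon : -ε ≤ ⟪ztil - zs, v⟫)
    (herr : ‖lam • v + ztil - w‖ ^ 2 + 2 * lam * ε ≤ σ ^ 2 * ‖ztil - w‖ ^ 2)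
    (hz : z = w - (τ * lam) • v) :
    η * ‖z - w‖ ^ 2 ≤ ‖w - zs‖ ^ 2 - ‖z - zs‖ ^ 2 ∧
      τ * (1 - σ ^ 2) * ‖ztil - w‖ ^ 2 ≤ ‖w - zs‖ ^ 2 - ‖z - zs‖ ^ 2 := by
  have hzs : z - zs = (w - zs) - τ • (lam • v) := by rw [hz, smul_smul]; abel
  have hzw : z - w = -(τ • (lam • v)) := by rw [hz, smul_smul]; abel
  have hwz : w - zs = -(ztil - w) + (ztil - zs) := by abel
  have hη1 : 0 ≤ 1 + η := (pos_of_mul_pos_left (by rw [hη]; norm_num) (by positivity)).le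
  have hlow : -⟪ztil - w, lam • v⟫ - lam * ε ≤ ⟪w - zs, lam • v⟫ := by
    rw [hwz, inner_add_left, inner_neg_left, real_inner_smul_right (ztil - zs)]
    nlinarith [mul_le_mul_of_nonneg_left hmon hlam]
  rw [hzs, hzw, norm_neg]
  set a := lam • v
  set u := ztil - w
  have herr' : ‖a + u‖ ^ 2 + 2 * (lam * ε) ≤ σ ^ 2 * ‖u‖ ^ 2 := by
    simpa only [u, add_sub_assoc, mul_assoc] using herr
  have hkey := norm_sq_le_of_hpe_error hσ0 hσ1 (mul_nonneg hlam hε) herr'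
  have hau : ‖a + u‖ ^ 2 = ‖a‖ ^ 2 + 2 * ⟪u, a⟫ + ‖u‖ ^ 2 := by
    rw [norm_add_sq_real, real_inner_comm]
  rw [norm_sub_sq_real (w - zs), real_inner_smul_right, norm_smul, Real.norm_eq_abs, mul_pow,
    sq_abs]
  constructor
  · have hηB : (1 + η) * ((1 + σ) * τ) * (τ * (-⟪u, a⟫ - lam * ε)) =
        2 * (τ * (-⟪u, a⟫ - lam * ε)) := by rw [hη]
    nlinarith [mul_le_mul_of_nonneg_left hkey (mul_nonneg (mul_nonneg hτ0 hτ0) hη1),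
      mul_le_mul_of_nonneg_left hlow hτ0]
  · nlinarith [mul_le_mul_of_nonneg_left hlow hτ0, mul_le_mul_of_nonneg_left herr' hτ0,
      mul_nonneg (mul_nonneg hτ0 (sub_nonneg.2 hτ1)) (sq_nonneg ‖a‖)]

end HPE

section Energy

variable {H : Type*} [SeminormedAddCommGroup H]

/-- The Lyapunov function of the inertial scheme, evaluated at `a = α_k`, `x = z_k`,
`y = z_{k-1}`. -/
def inertialEnergy (α : ℝ) (zs : H) (a : ℝ) (x y : H) : ℝ :=
  (1 - α) ^ 2 * ‖x - zs‖ ^ 2 - (1 - α) ^ 2 * a * ‖y - zs‖ ^ 2 +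
    (1 - α) * (α * (1 + α)) * ‖x - y‖ ^ 2

theorem inertialEnergy_nonneg {α a : ℝ} (zs x y : H) (hα0 : 0 ≤ α) (hα1 : α < 1) (haα : a ≤ α) :
    0 ≤ inertialEnergy α zs a x y := by
  have hy : ‖y - zs‖ ≤ ‖x - zs‖ + ‖x - y‖ := by
    rw [add_comm, norm_sub_rev x y]; exact norm_sub_le_norm_sub_add_norm_sub y x zs
  have hy2 := mul_le_mul_of_nonneg_left (pow_le_pow_left₀ (norm_nonneg _) hy 2)
    (by positivity : (0:ℝ) ≤ (1 - α) ^ 2 * α)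
  have hs := mul_nonneg (by linarith : (0:ℝ) ≤ 1 - α)
    (sq_nonneg ((1 - α) * ‖x - zs‖ - α * ‖x - y‖))
  unfold inertialEnergy
  nlinarith [mul_nonneg (mul_nonneg (by linarith : (0:ℝ) ≤ 1 - α) (sq_nonneg α))
    (sq_nonneg ‖x - y‖), mul_le_mul_of_nonneg_left haα
    (by positivity : (0:ℝ) ≤ (1 - α) ^ 2 * ‖y - zs‖ ^ 2)]

theorem inertialEnergy_self_le {α a : ℝ} (zs x : H) (ha : 0 ≤ a) :
    inertialEnergy α zs a x x ≤ (1 - α) ^ 2 * ‖x - zs‖ ^ 2 := by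
  simp only [inertialEnergy, sub_self, norm_zero]
  nlinarith [mul_nonneg (mul_nonneg (sq_nonneg (1 - α)) ha) (sq_nonneg ‖x - zs‖)]

end Energy

section Inertial

variable {H : Type*} [NormedAddCommGroup H] [InnerProductSpace ℝ H]

theorem norm_add_smul_sub_sq (x y : H) (a : ℝ) :
    ‖x + a • (x - y)‖ ^ 2 = (1 + a) * ‖x‖ ^ 2 - a * ‖y‖ ^ 2 + a * (1 + a) * ‖x - y‖ ^ 2 := by
  rw [norm_add_sq_real, real_inner_smul_right, norm_smul, Real.norm_eq_abs, mul_pow, sq_abs,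
    inner_sub_right, real_inner_self_eq_norm_sq, norm_sub_sq_real]
  ring

theorem inertial_norm_sq_le {α a : ℝ} (d d' : H) (ha0 : 0 ≤ a) (haα : a ≤ α) (hα1 : α < 1) :
    (1 - α) * (α * (1 + α)) * ‖d‖ ^ 2 + (1 - α) ^ 2 * (a * (1 + a)) * ‖d'‖ ^ 2 ≤
      (1 - α) * (α * (1 + α)) * ‖d'‖ ^ 2 + α * (1 + α) * ‖d - a • d'‖ ^ 2 := by
  have hinner := mul_le_mul_of_nonneg_left (real_inner_le_norm d d')
    (mul_nonneg (mul_nonneg (ha0.trans haα) (by linarith : (0:ℝ) ≤ 1 + α)) ha0)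
  rw [norm_sub_sq_real, real_inner_smul_right, norm_smul, Real.norm_eq_abs, mul_pow, sq_abs]
  rcases (ha0.trans haα).eq_or_lt with rfl | hα0
  · obtain rfl : a = 0 := le_antisymm haα ha0
    simp
  · have hm : 0 < α * (1 + α) * α := by positivity
    nlinarith [sq_nonneg (α * (1 + α) * (α * ‖d‖ - a * ‖d'‖)),
      mul_nonneg (mul_nonneg (mul_nonneg (mul_nonneg (by positivity : (0:ℝ) ≤ α * (1 + α))
        (by linarith : (0:ℝ) ≤ 1 - α)) hα0.le) (sub_nonneg.2 haα))
        (by positivity : (0:ℝ) ≤ (1 + α + 2 * a) * ‖d'‖ ^ 2)]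

theorem inertialEnergy_step {α a a' : ℝ} (zs x' x y : H) (ha0 : 0 ≤ a) (haa' : a ≤ a')
    (haα : a ≤ α) (hα1 : α < 1) :
    inertialEnergy α zs a' x' x +
        ((1 - α) ^ 2 * (‖x + a • (x - y) - zs‖ ^ 2 - ‖x' - zs‖ ^ 2) -
          α * (1 + α) * ‖x' - (x + a • (x - y))‖ ^ 2) ≤
      inertialEnergy α zs a x y := by
  have hw : x + a • (x - y) - zs = (x - zs) + a • ((x - zs) - (y - zs)) := by
    rw [sub_sub_sub_cancel_right]; abel
  have hd : x' - (x + a • (x - y)) = (x' - x) - a • (x - y) := by abel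
  rw [hw, hd, norm_add_smul_sub_sq, sub_sub_sub_cancel_right]
  have := inertial_norm_sq_le (x' - x) (x - y) ha0 haα hα1
  have : 0 ≤ (1 - α) ^ 2 * (a' - a) * ‖x - zs‖ ^ 2 := by
    have := sub_nonneg.2 haa'; positivity
  simp only [inertialEnergy]
  linarith

end Inertial

theorem inertialEnergy_descent {H : Type*} [NormedAddCommGroup H] [InnerProductSpace ℝ H]
    {α η a a' : ℝ} {zs x' x y w : H} (ha0 : 0 ≤ a) (haa' : a ≤ a') (haα : a ≤ α) (hα1 : α < 1)
    (hη : 0 ≤ η) (hw : w = x + a • (x - y))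
    (hhpe : η * ‖x' - w‖ ^ 2 ≤ ‖w - zs‖ ^ 2 - ‖x' - zs‖ ^ 2) :
    (η * (1 - α) ^ 2 - α * (1 + α)) * (‖w - zs‖ ^ 2 - ‖x' - zs‖ ^ 2) ≤
      η * inertialEnergy α zs a x y - η * inertialEnergy α zs a' x' x := by
  have hstep := inertialEnergy_step zs x' x y ha0 haa' haα hα1
  rw [← hw] at hstep
  nlinarith [mul_le_mul_of_nonneg_left hhpe
    (mul_nonneg (ha0.trans haα) (by linarith : (0:ℝ) ≤ 1 + α)),
    mul_le_mul_of_nonneg_left hstep hη]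

theorem exists_lt_le_div_of_telescoping {f Ψ : ℕ → ℝ} {k : ℕ} (hk : 0 < k) (hΨ : 0 ≤ Ψ k)
    (h : ∀ n, f n ≤ Ψ n - Ψ (n + 1)) : ∃ n < k, f n ≤ Ψ 0 / k := by
  have hsum : ∑ n ∈ range k, f n ≤ ∑ _n ∈ range k, Ψ 0 / k := by
    calc ∑ n ∈ range k, f n ≤ ∑ n ∈ range k, (Ψ n - Ψ (n + 1)) := sum_le_sum fun n _ => h n
      _ = Ψ 0 - Ψ k := by rw [sum_range_sub']
      _ ≤ ∑ _n ∈ range k, Ψ 0 / k := by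
        rw [sum_const, card_range, nsmul_eq_mul, mul_div_cancel₀ _ (by positivity)]
        linarith
  obtain ⟨n, hn, hfn⟩ := exists_le_of_sum_le (nonempty_range_iff.2 hk.ne') hsum
  exact ⟨n, mem_range.1 hn, hfn⟩

theorem two_mul_one_sub_div_lt_one {σ : ℝ} (hσ0 : -1 < σ) (hσ3 : σ < 3) :
    2 * (1 - σ) / (3 - σ + Real.sqrt (9 + 2 * σ - 7 * σ ^ 2)) < 1 := by
  have := Real.sqrt_nonneg (9 + 2 * σ - 7 * σ ^ 2)
  rw [div_lt_one (by linarith)]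
  linarith

theorem mul_one_sub_sq_eq_of_relaxation {σ τ η β' : ℝ} (hτ0 : τ ≠ 0)
    (hτ : τ = 2 * (β' - 1) ^ 2 / ((1 + σ) * (2 * (β' - 1) ^ 2 + 3 * β' - 1)))
    (hη : η = 2 / ((1 + σ) * τ) - 1) :
    η * (1 - β') ^ 2 = β' * (1 + β') := by
  have hβ' : β' - 1 ≠ 0 := fun h => hτ0 (by simp [hτ, h])
  have hden : (1 + σ) * (2 * (β' - 1) ^ 2 + 3 * β' - 1) ≠ 0 := fun h => hτ0 (by simp [hτ, h])
  have hσ : 1 + σ ≠ 0 := left_ne_zero_of_mul hden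
  have hQ : 2 * (β' - 1) ^ 2 + 3 * β' - 1 ≠ 0 := right_ne_zero_of_mul hden
  rw [hη, hτ]
  field_simp
  ring

theorem mul_one_add_lt_mul_one_sub_sq {α β' η : ℝ} (hηβ : η * (1 - β') ^ 2 = β' * (1 + β'))
    (hα0 : 0 ≤ α) (hαβ : α < β') (hβ1 : β' < 1) :
    α * (1 + α) < η * (1 - α) ^ 2 := by
  -- `t ↦ t (1 + t) / (1 - t)²` is increasing on `[0, 1)`
  have hmono : 0 < (β' - α) * (1 + β' + α - 3 * α * β') :=
    mul_pos (by linarith)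
      (by nlinarith [mul_pos (by linarith : 0 < 1 - α) (by linarith : 0 < 1 - β')])
  nlinarith [pow_pos (by linarith : 0 < 1 - β') 2,
    congrArg (· * (1 - α) ^ 2) hηβ]

theorem natCast_mul_le_inertial_constant_mul {α η q M d : ℝ} {k : ℕ} (hk : 0 < k) (hα0 : 0 ≤ α)
    (hα1 : α < 1) (hq0 : 0 < q) (hq : q = η * (1 - α) ^ 2 - α * (1 + α))
    (h : q * M ≤ η * ((1 - α) ^ 2 * d ^ 2) / k) :
    k * M ≤ (1 + 2 * α * (1 + α) / ((1 - α) ^ 2 * q)) * d ^ 2 := by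
  have hk' : (0 : ℝ) < k := by exact_mod_cast hk
  have hsq : (1 - α) ^ 2 ≤ 1 := pow_le_one₀ (by linarith) (by linarith)
  have hC : η * (1 - α) ^ 2 ≤ (1 + 2 * α * (1 + α) / ((1 - α) ^ 2 * q)) * q := by
    have hα' : α * (1 + α) ≤ 2 * α * (1 + α) / (1 - α) ^ 2 := by
      rw [le_div_iff₀ (by nlinarith)]
      nlinarith [mul_nonneg hα0 (by linarith : (0:ℝ) ≤ 1 + α)]
    have hsplit : (1 + 2 * α * (1 + α) / ((1 - α) ^ 2 * q)) * q =
        q + 2 * α * (1 + α) / (1 - α) ^ 2 := by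
      field_simp
    linarith
  rw [le_div_iff₀ hk'] at h
  refine le_of_mul_le_mul_left ?_ hq0
  nlinarith [mul_le_mul_of_nonneg_right hC (sq_nonneg d)]

theorem le_of_residual_sq_le {η τ lam lamlb C d x : ℝ} {k : ℕ} (hk : 0 < k) (hη : 0 < η)
    (hτ : 0 < τ) (hlb : 0 < lamlb) (hlam : lamlb ≤ lam) (hd : 0 ≤ d) (hx : 0 ≤ x)
    (h : k * (η * (τ * lam * x) ^ 2) ≤ C * d ^ 2) :
    x ≤ d / (lamlb * τ * Real.sqrt k) * Real.sqrt (η⁻¹ * C) := by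
  have hk' : (0 : ℝ) < k := by exact_mod_cast hk
  have hlx : (lamlb * τ * x) ^ 2 ≤ (τ * lam * x) ^ 2 :=
    pow_le_pow_left₀ (by positivity) (by nlinarith [mul_nonneg hτ.le hx]) 2
  rw [div_mul_eq_mul_div, le_div_iff₀ (by positivity)]
  calc x * (lamlb * τ * Real.sqrt k) = Real.sqrt ((lamlb * τ * x) ^ 2 * k) := by
        rw [Real.sqrt_mul (sq_nonneg _), Real.sqrt_sq (by positivity)]; ring
    _ ≤ Real.sqrt (d ^ 2 * (η⁻¹ * C)) := by
        refine Real.sqrt_le_sqrt ?_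
        rw [inv_mul_eq_div, mul_div_assoc', le_div_iff₀ hη]
        nlinarith [mul_le_mul_of_nonneg_left hlx (mul_nonneg hk'.le hη.le)]
    _ = d * Real.sqrt (η⁻¹ * C) := by rw [Real.sqrt_mul (sq_nonneg _), Real.sqrt_sq hd]

theorem le_of_hpe_error_le {σ τ lam lamlb ε U C d : ℝ} {k : ℕ} (hk : 0 < k) (hσ0 : 0 ≤ σ)
    (hσ1 : σ < 1) (hτ : 0 < τ) (hlb : 0 < lamlb) (hlam : lamlb ≤ lam) (hε : 0 ≤ ε) (hU : 0 ≤ U)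
    (herr : 2 * lam * ε ≤ σ ^ 2 * U) (h : k * (τ * (1 - σ ^ 2) * U) ≤ C * d ^ 2) :
    ε ≤ σ * d ^ 2 / (2 * (1 - σ ^ 2) * lamlb * τ * k) * C := by
  have hk' : (0 : ℝ) < k := by exact_mod_cast hk
  have hσ2 : 0 < 1 - σ ^ 2 := by nlinarith
  have hCd : 0 ≤ C * d ^ 2 := h.trans' (by positivity)
  rw [div_mul_eq_mul_div, le_div_iff₀ (by positivity)]
  have hlamε := mul_le_mul_of_nonneg_right hlam (by positivity : 0 ≤ ε * (2 * (1 - σ ^ 2) * τ * k))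
  nlinarith [mul_le_mul_of_nonneg_left herr (by positivity : 0 ≤ (1 - σ ^ 2) * τ * k),
    mul_le_mul_of_nonneg_left h (sq_nonneg σ),
    mul_le_mul_of_nonneg_right (by nlinarith : σ ^ 2 ≤ σ) hCd]

theorem assumptionA_pos {α σ τ β β' η : ℝ} (hα0 : 0 ≤ α) (hσ0 : 0 ≤ σ) (hσ1 : σ < 1) (hτ0 : 0 < τ)
    (hαβ : α < β) (hβ1 : β < 1)
    (hβ' : β' = max β (2 * (1 - σ) / (3 - σ + Real.sqrt (9 + 2 * σ - 7 * σ ^ 2))))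
    (hτA : τ = 2 * (β' - 1) ^ 2 / ((1 + σ) * (2 * (β' - 1) ^ 2 + 3 * β' - 1)))
    (hη : η = 2 / ((1 + σ) * τ) - 1) :
    0 < η ∧ α * (1 + α) < η * (1 - α) ^ 2 := by
  have hβ'1 : β' < 1 := hβ' ▸ max_lt hβ1 (two_mul_one_sub_div_lt_one (by linarith) (by linarith))
  have hαβ' : α < β' := hαβ.trans_le (hβ' ▸ le_max_left _ _)
  have hηβ := mul_one_sub_sq_eq_of_relaxation hτ0.ne' hτA hη
  exact ⟨by nlinarith [pow_pos (sub_pos.2 hβ'1) 2], mul_one_add_lt_mul_one_sub_sq hηβ hα0 hαβ' hβ'1⟩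

/-- `z k` is the paper's `z_k` for `k ≥ 0`; the paper's `z_{−1} = z₀` is encoded by the
truncated subtraction `0 - 1 = 0`. -/
theorem stmt13
    {H : Type*} [NormedAddCommGroup H] [InnerProductSpace ℝ H] [CompleteSpace H]
    (T : H → Set H) (hT : IsMaximalMonotoneOp T)
    (α σ τ : ℝ) (hα0 : 0 ≤ α) (hα1 : α < 1) (hσ0 : 0 ≤ σ) (hσ1 : σ < 1)
    (hτ0 : 0 < τ) (hτ1 : τ ≤ 1)
    (z w ztil v : ℕ → H) (ε lam αs : ℕ → ℝ)
    (hαs : ∀ k, 0 ≤ αs k ∧ αs k ≤ α)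
    (hmono : ∀ k, αs k ≤ αs (k + 1))
    (hw : ∀ k, w k = z k + αs k • (z k - z (k - 1)))
    (hlam : ∀ k, 1 ≤ k → 0 < lam k)
    (hεnn : ∀ k, 1 ≤ k → 0 ≤ ε k)
    (hin : ∀ k, 1 ≤ k → v k ∈ enl T (ε k) (ztil k))
    (herr : ∀ k, 1 ≤ k →
      ‖lam k • v k + ztil k - w (k - 1)‖ ^ 2 + 2 * lam k * ε k ≤
        σ ^ 2 * ‖ztil k - w (k - 1)‖ ^ 2)
    (hz : ∀ k, 1 ≤ k → z k = w (k - 1) - (τ * lam k) • v k)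
    -- Assumption (A):
    (β β' : ℝ) (hαβ : α < β) (hβ1 : β < 1)
    (hβ' : β' = max β (2 * (1 - σ) / (3 - σ + Real.sqrt (9 + 2 * σ - 7 * σ ^ 2))))
    (hτA : τ = 2 * (β' - 1) ^ 2 / ((1 + σ) * (2 * (β' - 1) ^ 2 + 3 * β' - 1)))
    (η : ℝ) (hη : η = 2 / ((1 + σ) * τ) - 1)
    (q : ℝ → ℝ) (hq : ∀ t, q t = (η - 1) * t ^ 2 - (1 + 2 * η) * t + η)
    (hzero : ∃ zs : H, (0 : H) ∈ T zs)
    (d0 : ℝ) (hd0 : d0 = Metric.infDist (z 0) {x : H | (0 : H) ∈ T x})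
    (lamlb : ℝ) (hlb : 0 < lamlb) (hlam2 : ∀ k, 1 ≤ k → lamlb ≤ lam k) :
    ∀ k : ℕ, 1 ≤ k → ∃ i : ℕ, 1 ≤ i ∧ i ≤ k ∧
      v i ∈ enl T (ε i) (ztil i) ∧
      ‖v i‖ ≤ d0 / (lamlb * τ * Real.sqrt k) *
        Real.sqrt (η⁻¹ * (1 + 2 * α * (1 + α) / ((1 - α) ^ 2 * q α))) ∧
      ε i ≤ σ * d0 ^ 2 / (2 * (1 - σ ^ 2) * lamlb * τ * k) *
        (1 + 2 * α * (1 + α) / ((1 - α) ^ 2 * q α)) := by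
  intro k hk
  obtain ⟨hη0, hqα0⟩ := assumptionA_pos hα0 hσ0 hσ1 hτ0 hαβ hβ1 hβ' hτA hη
  have hqα : q α = η * (1 - α) ^ 2 - α * (1 + α) := by rw [hq]; ring
  have hq0 : 0 < q α := hqα ▸ sub_pos.2 hqα0
  have hηid : (1 + η) * ((1 + σ) * τ) = 2 := by rw [hη]; field_simp; ring
  obtain ⟨zs, hzs, hzsd⟩ := exists_norm_sub_eq_infDist_of_isClosed_convex
    (K := {x | (0 : H) ∈ T x}) hzero (hT.isClosed_setOf_mem 0) (hT.convex_setOf_mem 0) (z 0)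
  have hpe (n : ℕ) := hpe_step_descent (zs := zs) hσ0 hσ1.le hτ0.le hτ1
    (hlam (n + 1) (by omega)).le (hεnn (n + 1) (by omega))
    hηid (by simpa using hin (n + 1) (by omega) zs 0 hzs) (herr (n + 1) (by omega))
    (hz (n + 1) (by omega))
  let E n := η * inertialEnergy α zs (αs n) (z n) (z (n - 1))
  obtain ⟨n, hnk, hn⟩ := exists_lt_le_div_of_telescoping (Ψ := E) hk
    (mul_nonneg hη0.le (inertialEnergy_nonneg _ _ _ hα0 hα1 (hαs k).2))
    fun n => hqα ▸
      inertialEnergy_descent (hαs n).1 (hmono n) (hαs n).2 hα1 hη0.le (hw n) (hpe n).1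
  have hE0 : E 0 ≤ η * ((1 - α) ^ 2 * d0 ^ 2) := by
    rw [hd0, ← hzsd]
    exact mul_le_mul_of_nonneg_left (inertialEnergy_self_le _ _ (hαs 0).1) hη0.le
  have hM := natCast_mul_le_inertial_constant_mul hk hα0 hα1 hq0 hqα (hn.trans (by gcongr))
  refine ⟨n + 1, by omega, by omega, hin (n + 1) (by omega), ?_, ?_⟩
  · have hzw : ‖z (n + 1) - w n‖ = τ * lam (n + 1) * ‖v (n + 1)‖ := by
      rw [hz (n + 1) (by omega), Nat.add_sub_cancel, sub_sub_cancel_left, norm_neg, norm_smul,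
        Real.norm_of_nonneg (mul_pos hτ0 (hlam (n + 1) (by omega))).le]
    refine le_of_residual_sq_le hk hη0 hτ0 hlb (hlam2 (n + 1) (by omega))
      (hd0 ▸ Metric.infDist_nonneg) (norm_nonneg _) ?_
    rw [← hzw]
    exact (mul_le_mul_of_nonneg_left (hpe n).1 (Nat.cast_nonneg k)).trans hM
  · exact le_of_hpe_error_le hk hσ0 hσ1 hτ0 hlb (hlam2 (n + 1) (by omega)) (hεnn (n + 1) (by omega))
      (sq_nonneg _) ((le_add_of_nonneg_left (sq_nonneg _)).trans (herr (n + 1) (by omega)))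
      ((mul_le_mul_of_nonneg_left (hpe n).2 (Nat.cast_nonneg k)).trans hM)
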